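/- arXiv:quant-ph/0605086 — 5 statements merged into one kernel-verified Lean document; each statement's English description precedes it below -/
import Mathlib

section
/- For all natural numbers n and m with m ≤ n, the number of m-tuples (S₁, …, S_m) of vectors in (ZMod 2)^n × (ZMod 2)^n that are linearly independent and satisfy ω(Sᵢ, Sⱼ) = 0 for all 1 ≤ i, j ≤ m equals ∏_{a=0}^{m−1} (2^{2n−a} − 2^a). -/
/-!
Appending a vector `v` to a linearly independent isotropic family `T` with span `W` gives another
such family exactly when `v ∈ W^⊥ \ W`. As `W` is isotropic, `W ≤ W^⊥`, and for a nondegenerate form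
`dim W^⊥ = dim V - dim W`, so over `𝔽_q` there are `q ^ (dim V - m) - q ^ m` choices of `v`,
independently of `T`; induction on `m` gives the product. This holds for every nondegenerate
alternating form over a finite field, and `symp` is one on `𝔽₂^(2n)`.
-/

/-- The binary symplectic form on `(ZMod 2)^n × (ZMod 2)^n`:
`ω((u,v),(u',v')) = u·v' + u'·v` (mod 2). -/
def symp {n : ℕ} (x y : (Fin n → ZMod 2) × (Fin n → ZMod 2)) : ZMod 2 :=
  (∑ i, x.1 i * y.2 i) + (∑ i, y.1 i * x.2 i)

open Module Submodule Set

namespace LinearMap.BilinForm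

section CommRing

variable {R M : Type*} [CommRing R] [AddCommGroup M] [Module R M] (B : LinearMap.BilinForm R M)

theorem mem_orthogonal_span_range_iff {ι : Type*} (T : ι → M) (v : M) :
    v ∈ B.orthogonal (span R (Set.range T)) ↔ ∀ i, B (T i) v = 0 := by
  change span R (Set.range T) ≤ LinearMap.ker (B.flip v) ↔ _
  rw [span_le, Set.range_subset_iff]
  rfl

variable {B}

theorem isotropic_snoc_iff (hB : B.IsAlt) {m : ℕ} (T : Fin m → M) (v : M) :
    (∀ i j, B ((Fin.snoc T v : Fin (m + 1) → M) i) ((Fin.snoc T v : Fin (m + 1) → M) j) = 0) ↔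
      (∀ i j, B (T i) (T j) = 0) ∧ ∀ i, B (T i) v = 0 := by
  refine ⟨fun h ↦ ⟨fun i j ↦ by simpa using h i.castSucc j.castSucc,
    fun i ↦ by simpa using h i.castSucc (Fin.last m)⟩, fun ⟨hT, hv⟩ i j ↦ ?_⟩
  induction i using Fin.lastCases <;> induction j using Fin.lastCases <;>
    simp [hT, hv, hB.self_eq_zero, hB.isRefl _ _ (hv _)]

end CommRing

variable {K V : Type*} [Field K] [AddCommGroup V] [Module K V] {B : LinearMap.BilinForm K V}

variable (B) in
def isotropicFrames (m : ℕ) : Set (Fin m → V) :=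
  {S | LinearIndependent K S ∧ ∀ i j, B (S i) (S j) = 0}

theorem span_range_le_orthogonal {m : ℕ} {T : Fin m → V} (hT : T ∈ B.isotropicFrames m) :
    span K (Set.range T) ≤ B.orthogonal (span K (Set.range T)) := by
  rw [span_le, Set.range_subset_iff]
  exact fun i ↦ (B.mem_orthogonal_span_range_iff T _).2 fun j ↦ hT.2 j i

theorem snoc_mem_isotropicFrames_iff (hB : B.IsAlt) {m : ℕ} (T : Fin m → V) (v : V) :
    Fin.snoc T v ∈ B.isotropicFrames (m + 1) ↔
      T ∈ B.isotropicFrames m ∧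
        v ∈ (B.orthogonal (span K (Set.range T)) : Set V) \ span K (Set.range T) := by
  simp only [isotropicFrames, mem_ofPred_eq, linearIndependent_finSnoc, isotropic_snoc_iff hB,
    mem_sdiff, SetLike.mem_coe, mem_orthogonal_span_range_iff]
  tauto

def isotropicFramesSuccEquiv (hB : B.IsAlt) (m : ℕ) :
    B.isotropicFrames (m + 1) ≃ Σ T : B.isotropicFrames m,
      ((B.orthogonal (span K (Set.range T.1)) : Set V) \ span K (Set.range T.1) : Set V) where
  toFun S :=
    have h := (snoc_mem_isotropicFrames_iff hB (Fin.init S.1) (S.1 (Fin.last m))).1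
      (by rw [Fin.snoc_init_self]; exact S.2)
    ⟨⟨Fin.init S.1, h.1⟩, ⟨S.1 (Fin.last m), h.2⟩⟩
  invFun p := ⟨Fin.snoc p.1.1 p.2.1, (snoc_mem_isotropicFrames_iff hB _ _).2 ⟨p.1.2, p.2.2⟩⟩
  left_inv S := Subtype.ext (Fin.snoc_init_self S.1)
  right_inv p := Sigma.subtype_ext (Subtype.ext (by simp)) (by simp)

variable [Finite K] [FiniteDimensional K V]

theorem natCard_orthogonal_sdiff (hB : B.Nondegenerate) {W : Submodule K V}
    (hW : W ≤ B.orthogonal W) :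
    Nat.card ((B.orthogonal W : Set V) \ W : Set V) =
      Nat.card K ^ (finrank K V - finrank K W) - Nat.card K ^ finrank K W := by
  have : Finite V := Module.finite_of_finite K
  rw [Nat.card_coe_set_eq, ncard_sdiff hW, ← Nat.card_coe_set_eq, ← Nat.card_coe_set_eq,
    SetLike.coe_sort_coe, SetLike.coe_sort_coe, natCard_eq_pow_finrank (K := K) (V := W),
    natCard_eq_pow_finrank (K := K) (V := B.orthogonal W), finrank_orthogonal hB]

theorem natCard_isotropicFrames (hN : B.Nondegenerate) (hA : B.IsAlt) (m : ℕ) :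
    Nat.card (B.isotropicFrames m) =
      ∏ a ∈ Finset.range m, (Nat.card K ^ (finrank K V - a) - Nat.card K ^ a) := by
  induction m with
  | zero =>
    rw [Finset.prod_range_zero, Nat.card_eq_one_iff_unique]
    exact ⟨inferInstance, ⟨⟨Fin.elim0, linearIndependent_empty_type, fun i ↦ i.elim0⟩⟩⟩
  | succ m ih =>
    have : Finite V := Module.finite_of_finite K
    have := Fintype.ofFinite (B.isotropicFrames m)
    have hfiber (T : B.isotropicFrames m) :
        Nat.card ((B.orthogonal (span K (Set.range T.1)) : Set V) \ span K (Set.range T.1) :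
          Set V) = Nat.card K ^ (finrank K V - m) - Nat.card K ^ m := by
      rw [natCard_orthogonal_sdiff hN (span_range_le_orthogonal T.2), finrank_span_eq_card T.2.1,
        Fintype.card_fin]
    rw [Nat.card_congr (isotropicFramesSuccEquiv hA m), Nat.card_sigma, Finset.prod_range_succ,
      ← ih, Finset.sum_congr rfl fun T _ ↦ hfiber T, Finset.sum_const, Finset.card_univ,
      ← Nat.card_eq_fintype_card, smul_eq_mul]

end LinearMap.BilinForm

def sympForm (n : ℕ) : LinearMap.BilinForm (ZMod 2) ((Fin n → ZMod 2) × (Fin n → ZMod 2)) :=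
  LinearMap.mk₂ (ZMod 2) symp
    (fun _ _ _ ↦ by
      simp only [symp, Prod.fst_add, Prod.snd_add, Pi.add_apply, add_mul, mul_add,
        Finset.sum_add_distrib]
      ring)
    (fun _ _ _ ↦ by simp [symp, mul_add, Finset.mul_sum, mul_assoc, mul_left_comm])
    (fun _ _ _ ↦ by
      simp only [symp, Prod.fst_add, Prod.snd_add, Pi.add_apply, add_mul, mul_add,
        Finset.sum_add_distrib]
      ring)
    (fun _ _ _ ↦ by simp [symp, mul_add, Finset.mul_sum, mul_assoc, mul_left_comm])

theorem sympForm_isAlt (n : ℕ) : (sympForm n).IsAlt :=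
  fun _ ↦ CharTwo.add_self_eq_zero _

theorem sympForm_nondegenerate (n : ℕ) : (sympForm n).Nondegenerate := by
  refine ((sympForm_isAlt n).isRefl.nondegenerate_iff_separatingLeft).2 fun x hx ↦ ?_
  ext i
  · simpa [sympForm, symp, Pi.single_apply] using hx (0, Pi.single i 1)
  · simpa [sympForm, symp, Pi.single_apply] using hx (Pi.single i 1, 0)

theorem stmt_1_general (n m : ℕ) :
    Nat.card {S : Fin m → (Fin n → ZMod 2) × (Fin n → ZMod 2) //
        LinearIndependent (ZMod 2) S ∧ ∀ i j, symp (S i) (S j) = 0} =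
      ∏ a ∈ Finset.range m, (2 ^ (2 * n - a) - 2 ^ a) := by
  have h := LinearMap.BilinForm.natCard_isotropicFrames (sympForm_nondegenerate n)
    (sympForm_isAlt n) m
  rwa [finrank_prod, finrank_fin_fun, ← two_mul, Nat.card_zmod] at h

theorem stmt_1 (n m : ℕ) (hm : m ≤ n) :
    Nat.card {S : Fin m → (Fin n → ZMod 2) × (Fin n → ZMod 2) //
        LinearIndependent (ZMod 2) S ∧ ∀ i j, symp (S i) (S j) = 0} =
      ∏ a ∈ Finset.range m, (2 ^ (2 * n - a) - 2 ^ a) :=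
  stmt_1_general n m
end

section
/- Let n, m, L be natural numbers and let v₁, …, v_L be linearly independent vectors in (ZMod 2)^n × (ZMod 2)^n whose span V satisfies V ∩ V^⊥ = {0}, where V^⊥ = {x : ω(x, w) = 0 for all w ∈ V} (this forces L to be even). Then for every m with m ≤ n − L/2, the number of m-tuples (S₁, …, S_m) of vectors in (ZMod 2)^n × (ZMod 2)^n that are linearly independent, satisfy ω(Sᵢ, Sⱼ) = 0 for all 1 ≤ i, j ≤ m, and satisfy ω(Sᵢ, v_l) = 0 for all 1 ≤ i ≤ m and 1 ≤ l ≤ L, equals ∏_{a=0}^{m−1} (2^{2n−L−a} − 2^a). -/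
namespace SympAux

open Module Submodule LinearMap Finset

abbrev F := ZMod 2
abbrev E (n : ℕ) := (Fin n → F) × (Fin n → F)

variable {n : ℕ}

lemma symp_comm (x y : E n) : symp x y = symp y x := by
  simp [symp, add_comm]

lemma symp_self (x : E n) : symp x x = 0 := by
  simp [symp]
  exact CharTwo.add_self_eq_zero _

lemma symp_add_left (x y z : E n) : symp (x + y) z = symp x z + symp y z := by
  simp [symp, add_mul, mul_add, Finset.sum_add_distrib]
  ring

lemma symp_smul_left (c : F) (x z : E n) : symp (c • x) z = c * symp x z := by
  simp [symp, Finset.mul_sum, mul_add, mul_assoc, mul_left_comm]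

/-- `x ↦ symp x y` as a linear map. -/
def sympR (y : E n) : E n →ₗ[F] F where
  toFun x := symp x y
  map_add' x z := symp_add_left x z y
  map_smul' c x := symp_smul_left c x y

@[simp] lemma sympR_apply (y x : E n) : sympR y x = symp x y := rfl

lemma symp_nondeg (x : E n) (h : ∀ w : E n, symp x w = 0) : x = 0 := by
  have h1 : ∀ i, x.1 i = 0 := by
    intro i
    have := h (0, Pi.single i 1)
    simpa [symp, Pi.single_apply, Finset.sum_ite_eq'] using this
  have h2 : ∀ i, x.2 i = 0 := by
    intro i
    have := h (Pi.single i 1, 0)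
    simpa [symp, Pi.single_apply, Finset.sum_ite_eq'] using this
  exact Prod.ext (funext h1) (funext h2)

lemma finrank_E : finrank F (E n) = 2 * n := by
  simp [E, Module.finrank_prod]
  ring

lemma card_submodule (P : Submodule F (E n)) : Nat.card P = 2 ^ finrank F P := by
  classical
  have : Fintype P := Fintype.ofFinite P
  rw [Nat.card_eq_fintype_card, Module.card_fintype (Module.finBasis F P)]
  simp


lemma finrank_inf_perp (W : Submodule F (E n)) {r : ℕ} (t : Fin r → E n)
    (ht : LinearIndependent F t)
    (hrel : ∀ u ∈ Submodule.span F (Set.range t), (∀ x ∈ W, symp x u = 0) → u = 0) :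
    finrank F ↥(W ⊓ ⨅ i, LinearMap.ker (sympR (t i))) = finrank F ↥W - r := by
  classical
  set φ : E n →ₗ[F] (Fin r → F) := LinearMap.pi (fun i => sympR (t i)) with hφ
  set ψ := φ.domRestrict W with hψ
  have hker : LinearMap.ker ψ = (W ⊓ ⨅ i, LinearMap.ker (sympR (t i))).comap W.subtype := by
    ext x
    simp [hψ, hφ, LinearMap.mem_ker, Submodule.mem_iInf, funext_iff, LinearMap.pi_apply,
      Submodule.mem_comap, x.2]
  have hsurj : Function.Surjective ψ := by
    rw [← LinearMap.range_eq_top]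
    by_contra hns
    obtain ⟨y, hy⟩ : ∃ y, y ∉ LinearMap.range ψ := by
      by_contra h; push_neg at h; exact hns (eq_top_iff.mpr fun y _ => h y)
    obtain ⟨f, hfann, hfy⟩ : ∃ f, f ∈ (LinearMap.range ψ).dualAnnihilator ∧ f y ≠ 0 := by
      by_contra h; push_neg at h
      exact hy ((Subspace.forall_mem_dualAnnihilator_apply_eq_zero_iff
        (LinearMap.range ψ) y).mp (fun g hg => h g hg))
    set c : Fin r → F := fun i => f (fun j => if i = j then 1 else 0) with hc
    have hcex : ∃ i, c i ≠ 0 := by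
      by_contra hall; push_neg at hall
      apply hfy
      rw [LinearMap.pi_apply_eq_sum_univ f y]
      refine Finset.sum_eq_zero fun i _ => ?_
      have h0 : f (fun j => if i = j then 1 else 0) = 0 := hall i
      rw [h0, smul_zero]
    set u : E n := ∑ i, c i • t i with hu
    have hu_mem : u ∈ Submodule.span F (Set.range t) :=
      Submodule.sum_mem _ fun i _ =>
        Submodule.smul_mem _ _ (Submodule.subset_span ⟨i, rfl⟩)
    have hu0 : ∀ x ∈ W, symp x u = 0 := by
      intro x hx
      have h1 : symp x u = ∑ i, c i * symp x (t i) := by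
        rw [symp_comm]
        show sympR x u = _
        rw [hu, map_sum]
        refine Finset.sum_congr rfl fun i _ => ?_
        rw [map_smul, smul_eq_mul, sympR_apply, symp_comm]
      have h2 : f (ψ ⟨x, hx⟩) = 0 :=
        (Submodule.mem_dualAnnihilator f).mp hfann _ ⟨⟨x, hx⟩, rfl⟩
      rw [LinearMap.pi_apply_eq_sum_univ f (ψ ⟨x, hx⟩)] at h2
      rw [h1, ← h2]
      refine Finset.sum_congr rfl fun i _ => ?_
      have e1 : ψ ⟨x, hx⟩ i = symp x (t i) := rfl
      have e2 : f (fun j => if i = j then 1 else 0) = c i := rfl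
      rw [e1, e2, smul_eq_mul, mul_comm]
    have hu_zero := hrel u hu_mem hu0
    obtain ⟨i, hi⟩ := hcex
    exact hi (Fintype.linearIndependent_iff.mp ht c (by rw [← hu]; exact hu_zero) i)
  have hrange : finrank F ↥(LinearMap.range ψ) = r := by
    rw [LinearMap.range_eq_top.mpr hsurj, finrank_top]
    simp
  have hrn := LinearMap.finrank_range_add_finrank_ker ψ
  have hmap : finrank F ↥(W ⊓ ⨅ i, LinearMap.ker (sympR (t i))) = finrank F (LinearMap.ker ψ) := by
    rw [hker, ← Submodule.finrank_map_subtype_eq, Submodule.map_comap_subtype,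
      inf_of_le_right inf_le_left]
  omega


/-- The predicate on tuples we are counting. -/
def Q (W : Submodule F (E n)) (m : ℕ) (S : Fin m → E n) : Prop :=
  (∀ i, S i ∈ W) ∧ LinearIndependent F S ∧ ∀ i j, symp (S i) (S j) = 0

/-- Splitting a good `(m+1)`-tuple into a good `m`-tuple and an extension vector. -/
def snocEquiv (W : Submodule F (E n)) (m : ℕ) :
    {S : Fin (m + 1) → E n // Q W (m + 1) S} ≃
      Σ S' : {T : Fin m → E n // Q W m T},
        {x : E n // x ∈ W ∧ (∀ i, symp x (S'.1 i) = 0) ∧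
          x ∉ Submodule.span F (Set.range S'.1)} where
  toFun S :=
    ⟨⟨Fin.init S.1, fun i => S.2.1 i.castSucc,
      ((linearIndependent_fin_snoc (v := Fin.init S.1) (x := S.1 (Fin.last m))).mp
        (by rw [Fin.snoc_init_self]; exact S.2.2.1)).1,
      fun i j => S.2.2.2 i.castSucc j.castSucc⟩,
     ⟨S.1 (Fin.last m), S.2.1 (Fin.last m), fun i => S.2.2.2 (Fin.last m) i.castSucc,
      ((linearIndependent_fin_snoc (v := Fin.init S.1) (x := S.1 (Fin.last m))).mp
        (by rw [Fin.snoc_init_self]; exact S.2.2.1)).2⟩⟩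
  invFun P :=
    ⟨Fin.snoc P.1.1 P.2.1, by
      obtain ⟨⟨S', hS'W, hS'ind, hS'iso⟩, x, hxW, hxperp, hxns⟩ := P
      refine ⟨?_, ?_, ?_⟩
      · intro i
        refine Fin.lastCases ?_ ?_ i
        · simpa using hxW
        · intro j; simpa using hS'W j
      · exact linearIndependent_fin_snoc.mpr ⟨hS'ind, hxns⟩
      · intro i j
        refine Fin.lastCases ?_ ?_ i
        · refine Fin.lastCases ?_ ?_ j
          · simpa using symp_self x
          · intro j'; simpa using hxperp j'
        · intro i'
          refine Fin.lastCases ?_ ?_ j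
          · simpa using show symp (S' i') x = 0 by rw [symp_comm]; exact hxperp i'
          · intro j'; simpa using hS'iso i' j'⟩
  left_inv S := Subtype.ext (Fin.snoc_init_self S.1)
  right_inv P := by
    obtain ⟨⟨S', hS'⟩, x, hx⟩ := P
    refine Sigma.ext (Subtype.ext ?_) ?_
    · exact funext fun i => by simp
    · refine (Subtype.heq_iff_coe_eq ?_).mpr ?_
      · intro y
        simp [Fin.init_snoc]
      · simp

lemma fiber_card (W : Submodule F (E n))
    (hW : ∀ x ∈ W, (∀ y ∈ W, symp x y = 0) → x = 0) {m : ℕ}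
    (S' : Fin m → E n) (h : Q W m S') :
    Nat.card {x : E n // x ∈ W ∧ (∀ i, symp x (S' i) = 0) ∧
        x ∉ Submodule.span F (Set.range S')} =
      2 ^ (finrank F W - m) - 2 ^ m := by
  classical
  set U : Submodule F (E n) := W ⊓ ⨅ i, LinearMap.ker (sympR (S' i)) with hU
  have hspanW : Submodule.span F (Set.range S') ≤ W :=
    Submodule.span_le.mpr (by rintro _ ⟨i, rfl⟩; exact h.1 i)
  have hUr : finrank F U = finrank F W - m := by
    have := finrank_inf_perp W S' h.2.1 (fun u hu h0 => by
      refine hW u (hspanW hu) fun y hy => ?_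
      rw [symp_comm]; exact h0 y hy)
    simpa using this
  have hspanU : (Submodule.span F (Set.range S') : Set (E n)) ⊆ (U : Set (E n)) := by
    intro x hx
    have hx' : x ∈ Submodule.span F (Set.range S') := hx
    refine Submodule.mem_inf.mpr ⟨hspanW hx', Submodule.mem_iInf _ |>.mpr fun i => ?_⟩
    -- x ∈ span S' and each generator is perp to S' i
    have hgen : Submodule.span F (Set.range S') ≤ LinearMap.ker (sympR (S' i)) :=
      Submodule.span_le.mpr (by rintro _ ⟨j, rfl⟩; simpa using h.2.2 j i)
    exact hgen hx'
  have hiff : ∀ x : E n,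
      (x ∈ W ∧ (∀ i, symp x (S' i) = 0) ∧ x ∉ Submodule.span F (Set.range S')) ↔
        x ∈ ((U : Set (E n)) \ (Submodule.span F (Set.range S') : Set (E n))) := by
    intro x
    simp only [Set.mem_diff, SetLike.mem_coe, hU, Submodule.mem_inf, Submodule.mem_iInf,
      LinearMap.mem_ker, sympR_apply]
    tauto
  rw [Nat.card_congr (Equiv.subtypeEquivRight hiff), Nat.card_coe_set_eq,
    Set.ncard_diff hspanU (Set.toFinite _)]
  have e1 : (U : Set (E n)).ncard = 2 ^ (finrank F W - m) := by
    rw [← Nat.card_coe_set_eq]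
    have : Nat.card (U : Set (E n)) = Nat.card U := rfl
    rw [this, card_submodule, hUr]
  have e2 : (Submodule.span F (Set.range S') : Set (E n)).ncard = 2 ^ m := by
    rw [← Nat.card_coe_set_eq]
    have : Nat.card (Submodule.span F (Set.range S') : Set (E n)) =
      Nat.card (Submodule.span F (Set.range S')) := rfl
    rw [this, card_submodule, finrank_span_eq_card h.2.1]
    simp
  rw [e1, e2]

lemma count_isotropic (W : Submodule F (E n))
    (hW : ∀ x ∈ W, (∀ y ∈ W, symp x y = 0) → x = 0) (m : ℕ) :
    Nat.card {S : Fin m → E n // Q W m S} =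
      ∏ a ∈ Finset.range m, (2 ^ (finrank F W - a) - 2 ^ a) := by
  classical
  induction m with
  | zero =>
    rw [Finset.range_zero, Finset.prod_empty]
    haveI : Unique {S : Fin 0 → E n // Q W 0 S} :=
      { default := ⟨fun i => i.elim0, fun i => i.elim0, linearIndependent_empty_type,
          fun i => i.elim0⟩
        uniq := fun S => Subtype.ext (funext fun i => i.elim0) }
    exact Nat.card_unique
  | succ m ih =>
    rw [Nat.card_congr (snocEquiv W m)]
    haveI : Fintype {T : Fin m → E n // Q W m T} := Fintype.ofFinite _
    haveI : ∀ S' : {T : Fin m → E n // Q W m T},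
        Fintype {x : E n // x ∈ W ∧ (∀ i, symp x (S'.1 i) = 0) ∧
          x ∉ Submodule.span F (Set.range S'.1)} := fun _ => Fintype.ofFinite _
    rw [Nat.card_eq_fintype_card, Fintype.card_sigma]
    have hc : ∀ S' : {T : Fin m → E n // Q W m T},
        Fintype.card {x : E n // x ∈ W ∧ (∀ i, symp x (S'.1 i) = 0) ∧
          x ∉ Submodule.span F (Set.range S'.1)} =
        2 ^ (finrank F W - m) - 2 ^ m := fun S' => by
      rw [← Nat.card_eq_fintype_card]; exact fiber_card W hW S'.1 S'.2
    rw [Finset.sum_congr rfl fun S' _ => hc S', Finset.sum_const, Finset.card_univ,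
      smul_eq_mul, ← Nat.card_eq_fintype_card, ih, Finset.prod_range_succ]

end SympAux


open SympAux Module

theorem stmt_2 (n L : ℕ) (v : Fin L → (Fin n → ZMod 2) × (Fin n → ZMod 2))
    (hv : LinearIndependent (ZMod 2) v)
    (hnd : ∀ x ∈ Submodule.span (ZMod 2) (Set.range v),
        (∀ w ∈ Submodule.span (ZMod 2) (Set.range v), symp x w = 0) → x = 0)
    (m : ℕ) (hm : m ≤ n - L / 2) :
    Nat.card {S : Fin m → (Fin n → ZMod 2) × (Fin n → ZMod 2) //
        LinearIndependent (ZMod 2) S ∧ (∀ i j, symp (S i) (S j) = 0) ∧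
        (∀ i l, symp (S i) (v l) = 0)} =
      ∏ a ∈ Finset.range m, (2 ^ (2 * n - L - a) - 2 ^ a) := by
  classical
  set W : Submodule F (E n) := ⨅ l, LinearMap.ker (sympR (v l)) with hWdef
  have mem_W : ∀ x : E n, x ∈ W ↔ ∀ l, symp x (v l) = 0 := fun x => by
    simp [hWdef, Submodule.mem_iInf]
  have hrel : ∀ u ∈ Submodule.span F (Set.range v),
      (∀ x ∈ (⊤ : Submodule F (E n)), symp x u = 0) → u = 0 := by
    intro u _ h0
    exact symp_nondeg u fun w => by rw [symp_comm]; exact h0 w trivial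
  have hd : finrank F ↥W = 2 * n - L := by
    have h1 := finrank_inf_perp (⊤ : Submodule F (E n)) v hv hrel
    rw [top_inf_eq] at h1
    rw [hWdef, h1, finrank_top, finrank_E]
  set V := Submodule.span F (Set.range v) with hVdef
  have hVrank : finrank F ↥V = L := by
    rw [hVdef, finrank_span_eq_card hv]; simp
  have hVW : V ⊓ W = ⊥ := by
    rw [eq_bot_iff]; intro u hu
    have hu1 : u ∈ V := hu.1
    have hu2 : u ∈ W := hu.2
    have hall : ∀ w ∈ V, symp u w = 0 := by
      intro w hw
      have hle : V ≤ LinearMap.ker (sympR u) := by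
        rw [hVdef]; refine Submodule.span_le.mpr ?_
        rintro _ ⟨l, rfl⟩
        rw [SetLike.mem_coe, LinearMap.mem_ker, sympR_apply, symp_comm]
        exact (mem_W u).mp hu2 l
      have h2 := hle hw
      rw [LinearMap.mem_ker, sympR_apply] at h2
      rw [symp_comm]; exact h2
    simpa using hnd u hu1 hall
  have hL2n : L ≤ 2 * n := by
    have h := Submodule.finrank_le V
    rw [hVrank, finrank_E] at h
    exact h
  have hE : finrank F ((Fin n → ZMod 2) × (Fin n → ZMod 2)) = 2 * n := finrank_E
  have hsup : V ⊔ W = ⊤ := by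
    apply Submodule.eq_top_of_finrank_eq
    have h := Submodule.finrank_sup_add_finrank_inf_eq V W
    rw [hVW, finrank_bot, hVrank, hd] at h
    show finrank F ↥(V ⊔ W) = finrank F (E n)
    rw [finrank_E]
    omega
  have hWnd : ∀ x ∈ W, (∀ y ∈ W, symp x y = 0) → x = 0 := by
    intro x hx h0
    apply symp_nondeg x
    intro w
    have hw : w ∈ V ⊔ W := hsup ▸ Submodule.mem_top
    obtain ⟨a, ha, b, hb, rfl⟩ := Submodule.mem_sup.mp hw
    have hxa : symp x a = 0 := by
      have hle : V ≤ LinearMap.ker (sympR x) := by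
        rw [hVdef]; refine Submodule.span_le.mpr ?_
        rintro _ ⟨l, rfl⟩
        rw [SetLike.mem_coe, LinearMap.mem_ker, sympR_apply, symp_comm]
        exact (mem_W x).mp hx l
      have h2 := hle ha
      rw [LinearMap.mem_ker, sympR_apply] at h2
      rw [symp_comm]; exact h2
    have hsplit : symp x (a + b) = symp x a + symp x b := by
      calc symp x (a + b) = symp (a + b) x := symp_comm _ _
        _ = symp a x + symp b x := symp_add_left a b x
        _ = symp x a + symp x b := by rw [symp_comm a x, symp_comm b x]
    rw [hsplit, hxa, h0 b hb, add_zero]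
  have key := count_isotropic W hWnd m
  have hiff : ∀ S : Fin m → E n,
      (LinearIndependent F S ∧ (∀ i j, symp (S i) (S j) = 0) ∧
        (∀ i l, symp (S i) (v l) = 0)) ↔ Q W m S := by
    intro S
    constructor
    · rintro ⟨h1, h2, h3⟩
      exact ⟨fun i => (mem_W _).mpr (h3 i), h1, h2⟩
    · rintro ⟨h1, h2, h3⟩
      exact ⟨h2, h3, fun i l => (mem_W _).mp (h1 i) l⟩
  rw [Nat.card_congr (Equiv.subtypeEquivRight hiff), key, hd]
end

section
/- For all natural numbers n, m, L with m ≥ 1, L ≥ 1, and L + 2(m − 1) < 2n, the inequality 2^{L·m} · ∏_{a=0}^{m−1} (2^{2n−L−a} − 2^a) ≤ ∏_{a=0}^{m−1} (2^{2n−a} − 2^a) holds (as an inequality of natural numbers; the hypothesis guarantees every factor on the left is positive). -/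
theorem stmt_3 (n m L : ℕ) (hm : 1 ≤ m) (hL : 1 ≤ L)
    (h : L + 2 * (m - 1) < 2 * n) :
    2 ^ (L * m) * ∏ a ∈ Finset.range m, (2 ^ (2 * n - L - a) - 2 ^ a) ≤
      ∏ a ∈ Finset.range m, (2 ^ (2 * n - a) - 2 ^ a) := by
  rw [show (2:ℕ) ^ (L * m) = ∏ _a ∈ Finset.range m, 2 ^ L by
    simp [Finset.prod_const, ← pow_mul], ← Finset.prod_mul_distrib]
  apply Finset.prod_le_prod'
  intro a ha
  have ha' : a < m := Finset.mem_range.mp ha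
  rw [Nat.mul_sub, ← pow_add, ← pow_add]
  have h2 : L + (2 * n - L - a) = 2 * n - a := by omega
  rw [h2]
  exact Nat.sub_le_sub_left (Nat.pow_le_pow_right (by norm_num) (by omega)) _
end

section
/- For every real number p with 0 < p ≤ 1/2 and every natural number n ≥ 1: Σ_{r=0}^{⌊p·n⌋} 3^r · C(n, r) ≤ (⌊p·n⌋ + 1) · 2^{n·(H(p) + p·log₂ 3)}. -/
/-- Binary entropy. -/
noncomputable def H (p : ℝ) : ℝ :=
  -p * Real.logb 2 p - (1 - p) * Real.logb 2 (1 - p)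

theorem stmt_6 (p : ℝ) (hp0 : 0 < p) (hp1 : p ≤ 1 / 2) (n : ℕ) (hn : 1 ≤ n) :
    ((∑ r ∈ Finset.range (⌊p * (n : ℝ)⌋₊ + 1), 3 ^ r * n.choose r : ℕ) : ℝ) ≤
      ((⌊p * (n : ℝ)⌋₊ + 1 : ℕ) : ℝ) *
        (2 : ℝ) ^ ((n : ℝ) * (H p + p * Real.logb 2 3)) := by
  have hp1' : p < 1 := lt_of_le_of_lt hp1 (by norm_num)
  have h1p : (0:ℝ) < 1 - p := by linarith
  set k := ⌊p * (n : ℝ)⌋₊ with hk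
  set B : ℝ := (2 : ℝ) ^ ((n : ℝ) * (H p + p * Real.logb 2 3)) with hB
  have hBpos : 0 < B := Real.rpow_pos_of_pos (by norm_num) _
  have hkle : (k : ℝ) ≤ p * n := Nat.floor_le (by positivity)
  have hBexp : B = Real.exp (p * n * Real.log 3 - p * n * Real.log p
      - (1 - p) * n * Real.log (1 - p)) := by
    rw [hB, Real.rpow_def_of_pos (by norm_num : (0:ℝ) < 2)]
    congr 1
    have h2 : Real.log 2 ≠ 0 := ne_of_gt (Real.log_pos (by norm_num))
    unfold H Real.logb
    field_simp
    ring
  have key : ∀ r ∈ Finset.range (k + 1), ((3 ^ r * n.choose r : ℕ) : ℝ) ≤ B := by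
    intro r hr
    rcases le_or_gt r n with hrn | hrn
    · have hrpn : (r : ℝ) ≤ p * n := by
        have hrk : r ≤ k := Nat.lt_succ_iff.mp (Finset.mem_range.mp hr)
        exact le_trans (by exact_mod_cast hrk) hkle
      have hden : (0:ℝ) < p ^ r * (1 - p) ^ (n - r) := by positivity
      have hbin : (n.choose r : ℝ) * (p ^ r * (1 - p) ^ (n - r)) ≤ 1 := by
        have hsum := add_pow p (1 - p) n
        rw [show p + (1 - p) = (1:ℝ) by ring, one_pow] at hsum
        have hmem : r ∈ Finset.range (n + 1) := Finset.mem_range.mpr (Nat.lt_succ_of_le hrn)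
        have := Finset.single_le_sum
          (f := fun i => p ^ i * (1 - p) ^ (n - i) * (n.choose i : ℝ))
          (fun i _ => by positivity) hmem
        calc (n.choose r : ℝ) * (p ^ r * (1 - p) ^ (n - r))
            = p ^ r * (1 - p) ^ (n - r) * (n.choose r : ℝ) := by ring
          _ ≤ ∑ i ∈ Finset.range (n + 1), p ^ i * (1 - p) ^ (n - i) * (n.choose i : ℝ) := this
          _ = 1 := hsum.symm
      have hcle : (n.choose r : ℝ) ≤ (p ^ r * (1 - p) ^ (n - r))⁻¹ := by
        rw [← one_div]
        exact (le_div_iff₀ hden).mpr hbin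
      have hnr : ((n - r : ℕ) : ℝ) = (n : ℝ) - r := by
        rw [Nat.cast_sub hrn]
      have hterm : (3:ℝ) ^ r * (p ^ r * (1 - p) ^ (n - r))⁻¹
          = Real.exp ((r:ℝ) * Real.log 3 - r * Real.log p
            - ((n:ℝ) - r) * Real.log (1 - p)) := by
        have e3 : (3:ℝ) ^ r = Real.exp ((r:ℝ) * Real.log 3) := by
          rw [← Real.rpow_natCast, Real.rpow_def_of_pos (by norm_num : (0:ℝ) < 3), mul_comm]
        have ep : p ^ r = Real.exp ((r:ℝ) * Real.log p) := by
          rw [← Real.rpow_natCast, Real.rpow_def_of_pos hp0, mul_comm]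
        have e1p : (1 - p) ^ (n - r) = Real.exp (((n:ℝ) - r) * Real.log (1 - p)) := by
          rw [← Real.rpow_natCast, Real.rpow_def_of_pos h1p, mul_comm, hnr]
        rw [e3, ep, e1p, ← Real.exp_add, ← Real.exp_neg, ← Real.exp_add]
        congr 1
        ring
      have hlog : 0 ≤ Real.log 3 - Real.log p + Real.log (1 - p) := by
        have hle : Real.log p ≤ Real.log (3 * (1 - p)) :=
          Real.log_le_log hp0 (by linarith)
        rw [Real.log_mul (by norm_num) (ne_of_gt h1p)] at hle
        linarith
      have hexp_le : (r:ℝ) * Real.log 3 - r * Real.log p - ((n:ℝ) - r) * Real.log (1 - p)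
          ≤ p * n * Real.log 3 - p * n * Real.log p - (1 - p) * n * Real.log (1 - p) := by
        nlinarith [mul_nonneg (sub_nonneg.mpr hrpn) hlog]
      calc ((3 ^ r * n.choose r : ℕ) : ℝ)
          = (3:ℝ) ^ r * (n.choose r : ℝ) := by push_cast; ring
        _ ≤ (3:ℝ) ^ r * (p ^ r * (1 - p) ^ (n - r))⁻¹ := by
            exact mul_le_mul_of_nonneg_left hcle (by positivity)
        _ = Real.exp ((r:ℝ) * Real.log 3 - r * Real.log p
            - ((n:ℝ) - r) * Real.log (1 - p)) := hterm
        _ ≤ Real.exp (p * n * Real.log 3 - p * n * Real.log p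
            - (1 - p) * n * Real.log (1 - p)) := Real.exp_le_exp.mpr hexp_le
        _ = B := hBexp.symm
    · rw [Nat.choose_eq_zero_of_lt hrn]
      simpa using hBpos.le
  calc ((∑ r ∈ Finset.range (k + 1), 3 ^ r * n.choose r : ℕ) : ℝ)
      = ∑ r ∈ Finset.range (k + 1), ((3 ^ r * n.choose r : ℕ) : ℝ) := by push_cast; rfl
    _ ≤ ∑ _r ∈ Finset.range (k + 1), B := Finset.sum_le_sum key
    _ = ((k + 1 : ℕ) : ℝ) * B := by simp [Finset.sum_const, nsmul_eq_mul]
end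

section
/- For every real number p with 0 < p ≤ 0.189: 1 − H(p) − p·log₂ 3 > 0. -/
/-!
Gibbs' inequality bounds `H p` by the cross entropy against any fixed `q`, which is affine in `p`.
For `q = 3/16` the terms in `log₂ 3` cancel and `1 - H p - p log₂ 3 ≥ (1 - p) log₂ 13 - 3`,
and since `0.189 < 7/37` it suffices that `(30/37) · log₂ 13 > 3`, i.e. `2 ^ 111 < 13 ^ 30`.
-/

open Real

lemma mul_log_div_le_sub {p q : ℝ} (hp : 0 < p) (hq : 0 < q) : p * log (q / p) ≤ q - p := by
  have h := mul_le_mul_of_nonneg_left (log_le_sub_one_of_pos (div_pos hq hp)) hp.le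
  rwa [mul_sub, mul_div_cancel₀ q hp.ne', mul_one] at h

lemma H_le_crossEntropy {p q : ℝ} (hp₀ : 0 < p) (hp₁ : p < 1) (hq₀ : 0 < q) (hq₁ : q < 1) :
    H p ≤ -p * logb 2 q - (1 - p) * logb 2 (1 - q) := by
  have gibbs : p * log (q / p) + (1 - p) * log ((1 - q) / (1 - p)) ≤ 0 := by
    linarith [mul_log_div_le_sub hp₀ hq₀, mul_log_div_le_sub (sub_pos.2 hp₁) (sub_pos.2 hq₁)]
  rw [log_div hq₀.ne' hp₀.ne', log_div (sub_pos.2 hq₁).ne' (sub_pos.2 hp₁).ne'] at gibbs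
  unfold H
  simp only [logb, neg_mul, ← mul_div_assoc]
  rw [← sub_nonneg]
  have hlog2 : 0 < log 2 := log_pos one_lt_two
  field_simp
  linarith

lemma logb_two_div_sixteen {x : ℝ} (hx : x ≠ 0) : logb 2 (x / 16) = logb 2 x - 4 := by
  rw [logb_div hx (by norm_num), show (16 : ℝ) = 2 ^ 4 by norm_num, logb_pow,
    logb_self_eq_one one_lt_two]
  norm_num

lemma three_lt_logb_two_thirteen : 3 < 30 / 37 * logb 2 13 := by
  have h : logb 2 (2 ^ 111) < logb 2 (13 ^ 30) :=
    logb_lt_logb one_lt_two (by positivity) (by norm_num)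
  rw [logb_pow, logb_pow, logb_self_eq_one one_lt_two] at h
  push_cast at h
  linarith

theorem stmt_14 (p : ℝ) (hp0 : 0 < p) (hp1 : p ≤ 0.189) :
    1 - H p - p * Real.logb 2 3 > 0 := by
  have hp : p < 7 / 37 := by norm_num at hp1; linarith
  have cross := H_le_crossEntropy (q := 3 / 16) hp0 (by linarith) (by norm_num) (by norm_num)
  rw [logb_two_div_sixteen three_ne_zero, show (1 : ℝ) - 3 / 16 = 13 / 16 by norm_num,
    logb_two_div_sixteen (by norm_num)] at cross
  have hlog13 : 0 < logb 2 13 := logb_pos one_lt_two (by norm_num)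
  have : 30 / 37 * logb 2 13 < (1 - p) * logb 2 13 := mul_lt_mul_of_pos_right (by linarith) hlog13
  linarith [three_lt_logb_two_thirteen]
end
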